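/- arXiv:1404.2047 — 2 statements merged into one kernel-verified Lean document; each statement's English description precedes it below -/
import Mathlib

section
/- For every integer m ≥ 1 and every real number r with 0 < r < 1, the integral over the annulus {z ∈ ℂ : r < |z| < 1} of z^{−m} · μ(z) with respect to Lebesgue measure equals iπ·log r; in particular the value is independent of m. -/
open MeasureTheory Complex

noncomputable def mu (z : ℂ) : ℝ :=
  z.im / (‖z‖ ^ 2 * ‖z - 1‖ ^ 2)

noncomputable def Li2 (w : ℂ) : ℂ :=
  -∫ t in (0:ℝ)..1, Complex.log (1 - w * (t : ℂ)) / (t : ℂ)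

/-!
In polar coordinates the annulus integral becomes `∫ ρ in r..1` of integrals over the circles
`|z| = ρ`. On such a circle `conj z = ρ² / z`, so `μ` agrees with the rational function
`I / (2ρ²) * (1 / (z - 1) + z / (z - ρ²))`, and `∮ z ^ (-m - 1) * μ z dz` is a sum of residues:
for `m ≥ 1` the residues of `z ^ (-m) / (z - ρ²)` at `0` and `ρ²` cancel, while `1 / (z - 1)` only
contributes its Taylor coefficient `-1` at `0`. Each circle therefore contributes `-π I / ρ`, and
`∫ ρ in r..1, 1 / ρ = -log r`. Fubini applies because `|z ^ (-m) * μ z| ≤ r ^ (-m - 2) / |z - 1|` on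
the annulus, which is integrable in the plane.
-/

open Set Metric Real ComplexConjugate

theorem integrable_iff_integrableOn_polarCoord_target {E : Type*} [NormedAddCommGroup E]
    [NormedSpace ℝ E] {f : ℝ × ℝ → E} :
    Integrable f ↔ IntegrableOn (fun p ↦ p.1 • f (polarCoord.symm p)) polarCoord.target := by
  rw [← integrableOn_univ, ← integrableOn_congr_set_ae polarCoord_source_ae_eq_univ,
    ← polarCoord.symm_image_target_eq_source,
    integrableOn_image_iff_integrableOn_abs_det_fderiv_smul volume
      polarCoord.open_target.measurableSet
      (fun p _ ↦ (hasFDerivAt_polarCoord_symm p).hasFDerivWithinAt) polarCoord.symm.injOn]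
  refine integrableOn_congr_fun (fun p hp ↦ ?_) polarCoord.open_target.measurableSet
  rw [det_fderivPolarCoordSymm, abs_of_pos hp.1]

theorem Complex.integrable_iff_integrableOn_polarCoord_target {E : Type*} [NormedAddCommGroup E]
    [NormedSpace ℝ E] {f : ℂ → E} :
    Integrable f ↔
      IntegrableOn (fun p ↦ p.1 • f (Complex.polarCoord.symm p)) polarCoord.target := by
  rw [← (volume_preserving_equiv_real_prod.symm).integrable_comp_emb
    measurableEquivRealProd.symm.measurableEmbedding]
  exact _root_.integrable_iff_integrableOn_polarCoord_target

theorem Complex.integral_eq_integral_Ioi_integral_Ioo_polarCoord_symm {E : Type*}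
    [NormedAddCommGroup E] [NormedSpace ℝ E] [CompleteSpace E] {f : ℂ → E} (hf : Integrable f) :
    ∫ z, f z = ∫ ρ in Ioi 0, ∫ θ in Ioo (-π) π, ρ • f (Complex.polarCoord.symm (ρ, θ)) := by
  rw [← Complex.integral_comp_polarCoord_symm, polarCoord_target, Measure.volume_eq_prod]
  exact setIntegral_prod _ (Complex.integrable_iff_integrableOn_polarCoord_target.1 hf)

theorem integrable_of_norm_le_rpow_norm_sub {E F : Type*} [NormedAddCommGroup E]
    [NormedSpace ℝ E] [FiniteDimensional ℝ E] [MeasurableSpace E] [BorelSpace E]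
    [NormedAddCommGroup F] {μ : Measure E} [μ.IsAddHaarMeasure] (hd : 1 ≤ Module.finrank ℝ E)
    {f : E → F} {c : E} {C α R : ℝ} (hα : α < Module.finrank ℝ E)
    (hsupp : Function.support f ⊆ ball c R) (h_decay : ∀ x, ‖f x‖ ≤ C * ‖x - c‖ ^ (-α))
    (hf : AEStronglyMeasurable f μ) : Integrable f μ := by
  have hball : IntegrableOn (fun x ↦ f (x + c)) (ball 0 R) μ :=
    integrableOn_ball_of_norm_le_rpow hd hα (ae_of_all _ fun x ↦ by simpa using h_decay (x + c))
      (hf.comp_quasiMeasurePreserving (measurePreserving_add_right μ c).quasiMeasurePreserving)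
  have hsupp' : Function.support (fun x ↦ f (x + c)) ⊆ ball 0 R := fun x hx ↦ by
    simpa [dist_eq_norm] using hsupp hx
  simpa using ((integrableOn_iff_integrable_of_support_subset hsupp').1 hball).comp_sub_right c

theorem integral_Ioo_ofReal_inv {a b : ℝ} (ha : 0 < a) (hab : a ≤ b) :
    ∫ x in Ioo a b, (x : ℂ)⁻¹ = Real.log (b / a) := by
  simp_rw [← ofReal_inv]
  rw [integral_complex_ofReal, ← integral_Ioc_eq_integral_Ioo,
    ← intervalIntegral.integral_of_le hab, integral_inv_of_pos ha (ha.trans_le hab)]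

namespace circleIntegral

theorem integral_inv_sub_eq_zero {c w : ℂ} {R : ℝ} (hR : 0 ≤ R) (hw : R < ‖w - c‖) :
    ∮ z in C(c, R), (z - w)⁻¹ = 0 := by
  refine DiffContOnCl.circleIntegral_eq_zero hR (DifferentiableOn.diffContOnCl fun z hz ↦ ?_)
  have hzw : z - w ≠ 0 := by
    have := mem_closedBall.1 (closure_ball_subset_closedBall hz)
    rw [sub_ne_zero]
    rintro rfl
    rw [dist_eq_norm] at this
    linarith
  exact ((differentiableAt_id.sub_const w).inv hzw).differentiableWithinAt

end circleIntegral

section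

variable {R : ℝ} {w : ℂ}

theorem circleIntegrable_zpow_mul_inv_sub (hR : 0 < R) (hw : ‖w‖ ≠ R) (k : ℤ) :
    CircleIntegrable (fun z ↦ z ^ k * (z - w)⁻¹) 0 R := by
  refine ContinuousOn.circleIntegrable hR.le fun z hz ↦ ?_
  have hz0 : z ≠ 0 := ne_zero_of_mem_sphere hR.ne' ⟨z, hz⟩
  have hzw : z - w ≠ 0 := sub_ne_zero.2 fun h ↦ hw (by simpa [h] using hz)
  exact ((continuousAt_zpow₀ z k (.inl hz0)).mul
    ((continuousAt_id.sub continuousAt_const).inv₀ hzw)).continuousWithinAt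

theorem circleIntegrable_zpow (hR : 0 < R) (k : ℤ) : CircleIntegrable (fun z ↦ z ^ k) 0 R :=
  ContinuousOn.circleIntegrable hR.le fun z hz ↦
    (continuousAt_zpow₀ z k (.inl (ne_zero_of_mem_sphere hR.ne' ⟨z, hz⟩))).continuousWithinAt

theorem circleIntegral_zpow_neg_succ_mul_inv_sub_eq_inv_mul_sub (hR : 0 < R) (hw0 : w ≠ 0)
    (hw : ‖w‖ ≠ R) (n : ℕ) :
    ∮ z in C(0, R), z ^ (-(n + 1 : ℤ)) * (z - w)⁻¹ =
      w⁻¹ * ((∮ z in C(0, R), z ^ (-n : ℤ) * (z - w)⁻¹) - ∮ z in C(0, R), z ^ (-(n + 1 : ℤ))) := by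
  have h : EqOn (fun z ↦ z ^ (-(n + 1 : ℤ)) * (z - w)⁻¹)
      (fun z ↦ w⁻¹ * (z ^ (-n : ℤ) * (z - w)⁻¹ - z ^ (-(n + 1 : ℤ)))) (sphere 0 R) := by
    intro z hz
    have hz0 : z ≠ 0 := ne_zero_of_mem_sphere hR.ne' ⟨z, hz⟩
    have hzw : z - w ≠ 0 := sub_ne_zero.2 fun h ↦ hw (by simpa [h] using hz)
    simp only
    rw [neg_add, zpow_add₀ hz0]
    field_simp
    ring
  rw [circleIntegral.integral_congr hR.le h, circleIntegral.integral_const_mul,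
    circleIntegral.integral_sub (circleIntegrable_zpow_mul_inv_sub hR hw _)
      (circleIntegrable_zpow hR _)]

theorem circleIntegral_zpow_neg_succ_mul_inv_sub (hR : 0 < R) (hw0 : w ≠ 0) (hw : ‖w‖ ≠ R)
    (n : ℕ) :
    ∮ z in C(0, R), z ^ (-(n + 1 : ℤ)) * (z - w)⁻¹ =
      w ^ (-(n + 1 : ℤ)) * ((∮ z in C(0, R), (z - w)⁻¹) - 2 * π * I) := by
  induction n with
  | zero =>
    have h := circleIntegral.integral_sub_center_inv 0 hR.ne'
    simp_rw [sub_zero] at h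
    rw [circleIntegral_zpow_neg_succ_mul_inv_sub_eq_inv_mul_sub hR hw0 hw 0]
    simp [h]
  | succ n ih =>
    have h := circleIntegral.integral_sub_zpow_of_ne (n := -(n + 1 + 1 : ℤ)) (by omega) 0 0 R
    simp_rw [sub_zero] at h
    rw [circleIntegral_zpow_neg_succ_mul_inv_sub_eq_inv_mul_sub hR hw0 hw, Nat.cast_succ, h, ih]
    rw [neg_add (↑n + 1 : ℤ), zpow_add₀ hw0, zpow_neg_one]
    ring

end

theorem Complex.polarCoord_symm_eq_circleMap (p : ℝ × ℝ) :
    Complex.polarCoord.symm p = circleMap 0 p.1 p.2 := by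
  simp only [Complex.polarCoord_symm_apply, circleMap, zero_add, exp_mul_I, ofReal_cos, ofReal_sin]

theorem integral_Ioo_circleMap_eq_circleIntegral {E : Type*} [NormedAddCommGroup E]
    [NormedSpace ℂ E] (f : ℂ → E) (c : ℂ) {R : ℝ} (hR : R ≠ 0) :
    ∫ θ in Ioo (-π) π, f (circleMap c R θ) = (-I) • ∮ z in C(c, R), (z - c)⁻¹ • f z := by
  have hper : Function.Periodic (fun θ ↦ f (circleMap c R θ)) (2 * π) := fun θ ↦ by
    simp only [periodic_circleMap c R θ]
  calc ∫ θ in Ioo (-π) π, f (circleMap c R θ)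
      = ∫ θ in 0..2 * π, f (circleMap c R θ) := by
        rw [← integral_Ioc_eq_integral_Ioo,
          ← intervalIntegral.integral_of_le (by linarith [pi_pos])]
        simpa [show -π + 2 * π = π by ring] using hper.intervalIntegral_add_eq (-π) 0
    _ = (2 * π : ℝ) • circleAverage f c R := by
        rw [circleAverage_def, smul_inv_smul₀ (by positivity)]
    _ = (-I) • ∮ z in C(c, R), (z - c)⁻¹ • f z := by
        rw [circleAverage_eq_circleIntegral hR, ← Complex.coe_smul, smul_smul]
        congr 1
        field_simp
        push_cast
        linear_combination (2 * π : ℂ) * I_sq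

@[fun_prop]
theorem measurable_mu : Measurable mu := by
  unfold mu; fun_prop

theorem abs_mu_le (z : ℂ) : |mu z| ≤ (‖z‖ ^ 2)⁻¹ * ‖z - 1‖⁻¹ := by
  have him : |z.im| ≤ ‖z - 1‖ := by simpa using abs_im_le_norm (z - 1)
  rw [mu, abs_div, abs_of_nonneg (by positivity : 0 ≤ ‖z‖ ^ 2 * ‖z - 1‖ ^ 2)]
  calc |z.im| / (‖z‖ ^ 2 * ‖z - 1‖ ^ 2) ≤ ‖z - 1‖ / (‖z‖ ^ 2 * ‖z - 1‖ ^ 2) := by gcongr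
    _ = (‖z‖ ^ 2)⁻¹ * ‖z - 1‖⁻¹ := by
      rcases eq_or_ne ‖z - 1‖ 0 with h | h
      · simp [h]
      · field_simp

theorem ofReal_mu_eq {z : ℂ} (hz0 : z ≠ 0) (hz1 : z ≠ 1) :
    (mu z : ℂ) = I / (2 * (‖z‖ : ℂ) ^ 2) * ((z - 1)⁻¹ + z * (z - (‖z‖ : ℂ) ^ 2)⁻¹) := by
  set ρ : ℂ := (‖z‖ : ℂ)
  have hρ : ρ ≠ 0 := by simpa [ρ] using hz0
  have hconj : conj z = ρ ^ 2 / z := by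
    rw [eq_div_iff hz0, mul_comm, mul_conj, normSq_eq_norm_sq]; push_cast; rfl
  have him : (z.im : ℂ) = (z - conj z) / (2 * I) := by
    rw [sub_conj]; field_simp; push_cast; ring
  have hnorm : (‖z - 1‖ : ℂ) ^ 2 = (z - 1) * (conj z - 1) := by
    rw [show conj z - 1 = conj (z - 1) by simp, mul_conj, normSq_eq_norm_sq]; push_cast; rfl
  have hzρ : z - ρ ^ 2 ≠ 0 := by
    intro h
    have h1 : ‖z‖ = ‖z‖ ^ 2 := by simpa [ρ, sub_eq_zero] using congrArg norm (sub_eq_zero.1 h)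
    have h2 : ‖z‖ = 1 := by
      have := norm_pos_iff.2 hz0
      nlinarith
    exact hz1 (by simpa [ρ, h2] using sub_eq_zero.1 h)
  rw [mu]
  push_cast
  rw [him, hnorm, hconj]
  have hz1' : z - 1 ≠ 0 := sub_ne_zero.2 hz1
  field_simp
  rw [I_sq, div_eq_iff (mul_ne_zero (pow_ne_zero 2 hρ) (sub_ne_zero.2 (sub_ne_zero.1 hzρ).symm))]
  ring

theorem integrable_indicator_annulus_zpow_mul_mu (m : ℕ) {r : ℝ} (hr0 : 0 < r) :
    Integrable ({z : ℂ | r < ‖z‖ ∧ ‖z‖ < 1}.indicator fun z ↦ z ^ (-(m : ℤ)) * (mu z : ℂ)) := by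
  set S : Set ℂ := {z : ℂ | r < ‖z‖ ∧ ‖z‖ < 1}
  have hS : MeasurableSet S := by measurability
  refine integrable_of_norm_le_rpow_norm_sub (c := 1) (α := 1) (R := 2)
    (C := (r ^ m)⁻¹ * (r ^ 2)⁻¹) (by simp) (by simp) ?_ (fun z ↦ ?_)
    ((by fun_prop : Measurable fun z : ℂ ↦ z ^ (-(m : ℤ)) * (mu z : ℂ)).indicator
      hS).aestronglyMeasurable
  · intro z hz
    obtain ⟨-, hz1⟩ : z ∈ S := Set.support_indicator_subset hz
    rw [mem_ball, dist_eq_norm]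
    linarith [norm_sub_le z 1, norm_one (α := ℂ)]
  · rw [Real.rpow_neg_one]
    by_cases hz : z ∈ S
    · rw [indicator_of_mem hz, norm_mul, norm_zpow, norm_real, Real.norm_eq_abs, zpow_neg,
        zpow_natCast, mul_assoc]
      gcongr
      · exact hz.1.le
      · exact (abs_mu_le z).trans (by gcongr; exact hz.1.le)
    · rw [indicator_of_notMem hz, norm_zero]
      positivity

theorem circleIntegral_zpow_mul_mu {m : ℕ} (hm : 1 ≤ m) {ρ : ℝ} (hρ0 : 0 < ρ) (hρ1 : ρ < 1) :
    ∮ z in C(0, ρ), z ^ (-(m : ℤ) - 1) * (mu z : ℂ) = π / ρ ^ 2 := by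
  obtain ⟨n, rfl⟩ := Nat.exists_eq_add_of_le' hm
  have hρ : (ρ : ℂ) ≠ 0 := by exact_mod_cast hρ0.ne'
  have hnorm_sq : ‖(ρ : ℂ) ^ 2‖ = ρ ^ 2 := by simp [abs_of_pos hρ0]
  have h1 : ‖(1 : ℂ)‖ ≠ ρ := by simpa using hρ1.ne'
  have hsq : ‖(ρ : ℂ) ^ 2‖ ≠ ρ := by rw [hnorm_sq]; nlinarith
  have h : EqOn (fun z ↦ z ^ (-((n + 1 : ℕ) : ℤ) - 1) * (mu z : ℂ))
      (fun z ↦ I / (2 * (ρ : ℂ) ^ 2) * (z ^ (-((n + 1 : ℕ) + 1 : ℤ)) * (z - 1)⁻¹ +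
        z ^ (-(n + 1 : ℤ)) * (z - (ρ : ℂ) ^ 2)⁻¹)) (sphere 0 ρ) := by
    intro z hz
    have hz : ‖z‖ = ρ := mem_sphere_zero_iff_norm.1 hz
    have hz0 : z ≠ 0 := by rintro rfl; simp [hρ0.ne] at hz
    have hz1 : z ≠ 1 := by rintro rfl; simp [hρ1.ne'] at hz
    simp only
    have hpow : z ^ (-(n + 1 : ℤ)) = z ^ (-((n + 1 : ℕ) + 1 : ℤ)) * z := by
      rw [← zpow_add_one₀ hz0]; push_cast; ring_nf
    rw [ofReal_mu_eq hz0 hz1, hz, hpow, sub_eq_add_neg, ← neg_add]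
    ring
  rw [circleIntegral.integral_congr hρ0.le h, circleIntegral.integral_const_mul,
    circleIntegral.integral_add (circleIntegrable_zpow_mul_inv_sub hρ0 h1 _)
      (circleIntegrable_zpow_mul_inv_sub hρ0 hsq _),
    circleIntegral_zpow_neg_succ_mul_inv_sub hρ0 one_ne_zero h1,
    circleIntegral_zpow_neg_succ_mul_inv_sub hρ0 (pow_ne_zero 2 hρ) hsq,
    circleIntegral.integral_inv_sub_eq_zero hρ0.le (by simpa using hρ1),
    circleIntegral.integral_sub_inv_of_mem_ball
      (by simpa [hnorm_sq] using hsq.lt_of_le (by nlinarith))]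
  rw [one_zpow, sub_self]
  field_simp
  linear_combination (-2 * π : ℂ) * I_sq

theorem integral_Ioo_polarCoord_symm_zpow_mul_mu {m : ℕ} (hm : 1 ≤ m) {ρ : ℝ} (hρ0 : 0 < ρ)
    (hρ1 : ρ < 1) :
    ∫ θ in Ioo (-π) π, ρ • ((Complex.polarCoord.symm (ρ, θ)) ^ (-(m : ℤ)) *
      (mu (Complex.polarCoord.symm (ρ, θ)) : ℂ)) = -(π * I) / ρ := by
  simp_rw [Complex.polarCoord_symm_eq_circleMap]
  rw [integral_Ioo_circleMap_eq_circleIntegral (fun z ↦ ρ • (z ^ (-(m : ℤ)) * (mu z : ℂ))) 0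
    hρ0.ne']
  have h : EqOn (fun z ↦ (z - 0)⁻¹ • ρ • (z ^ (-(m : ℤ)) * (mu z : ℂ)))
      (fun z ↦ ρ * (z ^ (-(m : ℤ) - 1) * (mu z : ℂ))) (sphere 0 ρ) := fun z hz ↦ by
    have hz0 : z ≠ 0 := ne_zero_of_mem_sphere hρ0.ne' ⟨z, hz⟩
    simp only [sub_zero, smul_eq_mul, Complex.real_smul, zpow_sub_one₀ hz0]
    ring
  rw [circleIntegral.integral_congr hρ0.le h, circleIntegral.integral_const_mul,
    circleIntegral_zpow_mul_mu hm hρ0 hρ1]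
  have hρ : (ρ : ℂ) ≠ 0 := by exact_mod_cast hρ0.ne'
  rw [smul_eq_mul]
  field_simp

theorem integral_Ioo_polarCoord_symm_indicator_annulus {m : ℕ} (hm : 1 ≤ m) {r ρ : ℝ}
    (hr0 : 0 < r) (hρ : 0 < ρ) :
    ∫ θ in Ioo (-π) π, ρ • {z : ℂ | r < ‖z‖ ∧ ‖z‖ < 1}.indicator
      (fun z ↦ z ^ (-(m : ℤ)) * (mu z : ℂ)) (Complex.polarCoord.symm (ρ, θ)) =
      (Ioo r 1).indicator (fun ρ ↦ -(π * I) / ρ) ρ := by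
  have hmem (θ : ℝ) :
      Complex.polarCoord.symm (ρ, θ) ∈ {z : ℂ | r < ‖z‖ ∧ ‖z‖ < 1} ↔ ρ ∈ Ioo r 1 := by
    simp [abs_of_pos hρ]
  by_cases hρ1 : ρ ∈ Ioo r 1
  · simp only [indicator_of_mem hρ1, indicator_of_mem ((hmem _).2 hρ1)]
    exact integral_Ioo_polarCoord_symm_zpow_mul_mu hm (hr0.trans hρ1.1) hρ1.2
  · simp only [indicator_of_notMem hρ1, indicator_of_notMem (mt (hmem _).1 hρ1), smul_zero,
      integral_zero]

theorem stmt_10 (m : ℕ) (hm : 1 ≤ m) (r : ℝ) (hr0 : 0 < r) (hr1 : r < 1) :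
    ∫ z in {z : ℂ | r < ‖z‖ ∧ ‖z‖ < 1},
        z ^ (-(m : ℤ)) * (mu z : ℂ) =
      Complex.I * (Real.pi : ℂ) * (Real.log r : ℂ) := by
  have hS : MeasurableSet {z : ℂ | r < ‖z‖ ∧ ‖z‖ < 1} := by measurability
  rw [← integral_indicator hS, Complex.integral_eq_integral_Ioi_integral_Ioo_polarCoord_symm
    (integrable_indicator_annulus_zpow_mul_mu m hr0)]
  calc ∫ ρ in Ioi 0, ∫ θ in Ioo (-π) π, ρ • {z : ℂ | r < ‖z‖ ∧ ‖z‖ < 1}.indicator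
        (fun z ↦ z ^ (-(m : ℤ)) * (mu z : ℂ)) (Complex.polarCoord.symm (ρ, θ))
      = ∫ ρ in Ioi 0, (Ioo r 1).indicator (fun ρ ↦ -(π * I) / ρ) ρ :=
        setIntegral_congr_fun measurableSet_Ioi fun ρ hρ ↦
          integral_Ioo_polarCoord_symm_indicator_annulus hm hr0 hρ
    _ = -(π * I) * ∫ ρ in Ioo r 1, (ρ : ℂ)⁻¹ := by
        rw [setIntegral_indicator measurableSet_Ioo, Ioi_inter_Ioo, max_eq_right hr0.le,
          ← integral_const_mul]
        simp_rw [div_eq_mul_inv]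
    _ = I * π * Real.log r := by
        rw [integral_Ioo_ofReal_inv hr0 hr1.le, one_div, Real.log_inv]
        push_cast
        ring
end

section
/- For every complex number z with |z| < 1, the integral over {w ∈ ℂ : |w| > 1} of (w − z)⁻¹ · μ(w) with respect to Lebesgue measure equals the negative of the integral over {w ∈ ℂ : |w| < 1} of w·(1 − z·w)⁻¹ · μ(w). (Change of variables w ↦ 1/w.) -/
/-! Substitute `w = u⁻¹`: inversion maps the punctured unit disc bijectively onto the exterior of
the unit circle with real Jacobian `‖d(u⁻¹)/du‖² = ‖u‖⁻⁴`, the density is anti-invariant in the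
form `μ(u⁻¹) = -‖u‖⁴ μ(u)`, and `(u⁻¹ - z)⁻¹ = u (1 - z u)⁻¹`. -/

open MeasureTheory Complex

theorem Complex.integral_image_eq_integral_norm_deriv_sq_smul {E : Type*} [NormedAddCommGroup E]
    [NormedSpace ℝ E] {s : Set ℂ} {f f' : ℂ → ℂ} (hs : MeasurableSet s)
    (hf' : ∀ x ∈ s, HasDerivWithinAt f (f' x) s x) (hf : Set.InjOn f s) (g : ℂ → E) :
    ∫ x in f '' s, g x = ∫ x in s, (‖f' x‖ ^ 2) • g (f x) := by
  rw [integral_image_eq_integral_abs_det_fderiv_smul volume hs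
    (fun x hx => ((hf' x hx).hasFDerivWithinAt.restrictScalars ℝ)) hf g]
  congr! 3 with x
  simp [ContinuousLinearMap.det, LinearMap.det_restrictScalars, Algebra.norm_complex_apply,
    Complex.normSq_eq_norm_sq]

theorem Complex.integral_image_inv {E : Type*} [NormedAddCommGroup E] [NormedSpace ℝ E]
    {s : Set ℂ} (hs : MeasurableSet s) (h0 : 0 ∉ s) (g : ℂ → E) :
    ∫ w in (·⁻¹) '' s, g w = ∫ u in s, (‖u‖ ^ 4)⁻¹ • g u⁻¹ := by
  rw [integral_image_eq_integral_norm_deriv_sq_smul hs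
    (fun u hu => (hasDerivAt_inv (ne_of_mem_of_not_mem hu h0)).hasDerivWithinAt)
    inv_injective.injOn]
  congr! 3 with u
  simp [← pow_mul]

theorem Complex.image_inv_norm_lt_one_diff_zero :
    (·⁻¹) '' ({w : ℂ | ‖w‖ < 1} \ {0}) = {w : ℂ | 1 < ‖w‖} := by
  rw [Set.image_inv_eq_inv]
  ext w
  rcases eq_or_ne w 0 with rfl | hw
  · simp
  · simp [hw, inv_lt_one_iff₀]

theorem mu_inv (u : ℂ) : mu u⁻¹ = -(‖u‖ ^ 4 * mu u) := by
  rcases eq_or_ne u 0 with rfl | hu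
  · simp [mu]
  have h1 : ‖u⁻¹ - 1‖ = ‖u - 1‖ / ‖u‖ := by
    rw [show u⁻¹ - 1 = -(u - 1) * u⁻¹ by field_simp; ring, norm_mul, norm_neg, norm_inv,
      div_eq_mul_inv]
  have hn : ‖u‖ ≠ 0 := norm_ne_zero_iff.mpr hu
  rw [mu, mu, h1, norm_inv, inv_im, normSq_eq_norm_sq]
  rcases eq_or_ne ‖u - 1‖ 0 with h | h
  · simp [h]
  field_simp

theorem inv_inv_sub_eq_mul_inv {K : Type*} [Field K] (z : K) {u : K} (hu : u ≠ 0) :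
    (u⁻¹ - z)⁻¹ = u * (1 - z * u)⁻¹ := by
  rw [show u⁻¹ - z = (1 - z * u) * u⁻¹ by field_simp, mul_inv, inv_inv, mul_comm]

theorem stmt_14_general (z : ℂ) :
    ∫ w in {w : ℂ | 1 < ‖w‖}, (w - z)⁻¹ * (mu w : ℂ) =
      -∫ w in {w : ℂ | ‖w‖ < 1}, w * (1 - z * w)⁻¹ * (mu w : ℂ) := by
  have hs : MeasurableSet ({w : ℂ | ‖w‖ < 1} \ {0}) :=
    (measurableSet_lt measurable_norm measurable_const).diff (measurableSet_singleton 0)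
  calc ∫ w in {w : ℂ | 1 < ‖w‖}, (w - z)⁻¹ * (mu w : ℂ)
      = ∫ u in {w : ℂ | ‖w‖ < 1} \ {0}, (‖u‖ ^ 4)⁻¹ • ((u⁻¹ - z)⁻¹ * (mu u⁻¹ : ℂ)) := by
        rw [← image_inv_norm_lt_one_diff_zero, integral_image_inv hs (by simp)]
    _ = ∫ u in {w : ℂ | ‖w‖ < 1} \ {0}, -(u * (1 - z * u)⁻¹ * (mu u : ℂ)) := by
        refine setIntegral_congr_fun hs fun u hu => ?_
        have hu0 : (‖u‖ : ℂ) ≠ 0 := by exact_mod_cast norm_ne_zero_iff.mpr hu.2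
        rw [mu_inv, inv_inv_sub_eq_mul_inv z hu.2, Complex.real_smul]
        push_cast
        field_simp
    _ = -∫ w in {w : ℂ | ‖w‖ < 1}, w * (1 - z * w)⁻¹ * (mu w : ℂ) := by
        rw [integral_neg, setIntegral_congr_set (sdiff_null_ae_eq_self (measure_singleton 0))]

theorem stmt_14 (z : ℂ) (hz : ‖z‖ < 1) :
    ∫ w in {w : ℂ | 1 < ‖w‖}, (w - z)⁻¹ * (mu w : ℂ) =
      -∫ w in {w : ℂ | ‖w‖ < 1}, w * (1 - z * w)⁻¹ * (mu w : ℂ) :=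
  stmt_14_general z
end
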